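/- arXiv:2312.08129 — 3 statements merged into one kernel-verified Lean document; each statement's English description precedes it below -/
import Mathlib

section
/- Let k ∈ ℕ and let S ⊆ ℤ be piecewise syndetic. Then the set {(a,d) ∈ ℤ × ℤ : {a, a+d, a+2d, ..., a+kd} ⊆ S} is piecewise syndetic in the semigroup ℤ × ℤ (with coordinatewise addition). -/
/-- `A` is thick in `(G,+)`: every finite set admits a translate inside `A`. -/
def IsThick {G : Type*} [Add G] (A : Set G) : Prop :=
  ∀ E : Finset G, ∃ g : G, ∀ e ∈ E, e + g ∈ A

/-- `A` is piecewise syndetic in `(G,+)`: there is a finite set `F` such that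
`⋃_{x ∈ F} (-x + A)` is thick, where `-x + A = {y | x + y ∈ A}`. -/
def IsPiecewiseSyndetic {G : Type*} [Add G] (A : Set G) : Prop :=
  ∃ F : Finset G, IsThick {y : G | ∃ x ∈ F, x + y ∈ A}


/-!
A set is piecewise syndetic exactly when it belongs to an ultrafilter lying in a minimal closed
left ideal of `βG`. Given such a `p ∋ S` in `M ⊆ βℤ`, the ultrafilters on `ℤ × ℤ` whose images
under all the maps `(a, d) ↦ a + i d`, `i ≤ k`, lie in `M` form a closed left ideal; pick an
idempotent `e` in a minimal closed left ideal inside it, and put `w = (a ↦ (a, 0))(p) + e`.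
The image of `e` under each of these maps is an idempotent of `M`, hence a right identity of `M`,
so every image of `w` is `p`. Thus all the sets `{(a, d) | a + i d ∈ S}` belong to `w`, and so
does their intersection, which is therefore piecewise syndetic.
-/

open Filter Set

attribute [local instance] Ultrafilter.add Ultrafilter.addSemigroup

namespace Ultrafilter

variable {G H : Type*}

theorem mem_add_iff [Add G] {s : Set G} {U V : Ultrafilter G} :
    s ∈ U + V ↔ {m | {m' | m + m' ∈ s} ∈ V} ∈ U := Iff.rfl

theorem map_add [Add G] [Add H] (ψ : G →ₙ+ H) (U V : Ultrafilter G) :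
    (U + V).map ψ = U.map ψ + V.map ψ :=
  coe_inj.mp <| Filter.ext fun s => by
    simp only [mem_coe, mem_map, mem_add_iff, preimage_ofPred_eq, mem_preimage, _root_.map_add]

theorem continuous_map (ψ : G → H) : Continuous (Ultrafilter.map ψ) :=
  ultrafilterBasis_is_basis.continuous_iff.2 <| forall_mem_range.mpr fun s =>
    ultrafilter_isOpen_basic (ψ ⁻¹' s)

end Ultrafilter

open Ultrafilter

theorem isThick_iff_exists_ultrafilter {G : Type*} [Add G] {T : Set G} :
    IsThick T ↔ ∃ p : Ultrafilter G, ∀ g, {y | g + y ∈ T} ∈ p := by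
  classical
  constructor
  · intro hT
    have : Nonempty G := let ⟨g, _⟩ := hT ∅; ⟨g⟩
    have hfin : ∀ E : Finset (Set G), ↑E ⊆ range (fun g => {y | g + y ∈ T}) →
        (⋂₀ (E : Set (Set G))).Nonempty := by
      intro E hE
      choose! g hg using fun c (hc : c ∈ (E : Set (Set G))) => hE hc
      obtain ⟨y, hy⟩ := hT (E.image g)
      exact ⟨y, mem_sInter.2 fun c hc => hg c hc ▸ hy (g c) (Finset.mem_image_of_mem g hc)⟩
    obtain ⟨p, hp⟩ := exists_ultrafilter_of_finite_inter_nonempty _ hfin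
    exact ⟨p, fun g => hp ⟨g, rfl⟩⟩
  · rintro ⟨p, hp⟩ E
    obtain ⟨y, hy⟩ := Filter.nonempty_of_mem ((biInter_mem E.finite_toSet).2 fun e _ => hp e)
    exact ⟨y, fun e he => mem_iInter₂.1 hy e he⟩

section ClosedLeftIdeal

variable {G : Type*} [AddSemigroup G]

structure IsClosedLeftIdeal (I : Set (Ultrafilter G)) : Prop where
  nonempty : I.Nonempty
  isClosed : IsClosed I
  add_mem : ∀ p, ∀ q ∈ I, p + q ∈ I

theorem isClosedLeftIdeal_range_add (r : Ultrafilter G) :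
    IsClosedLeftIdeal (range (· + r)) where
  nonempty := ⟨r + r, r, rfl⟩
  isClosed := (isCompact_range (continuous_add_left r)).isClosed
  add_mem := by
    rintro p _ ⟨u, rfl⟩
    exact ⟨p + u, add_assoc p u r⟩

theorem IsClosedLeftIdeal.exists_minimal_subset {I : Set (Ultrafilter G)}
    (hI : IsClosedLeftIdeal I) : ∃ M ⊆ I, Minimal IsClosedLeftIdeal M := by
  refine zorn_superset_nonempty {J | IsClosedLeftIdeal J} ?_ I hI
  intro c hc hchain hne
  have := hne.to_subtype
  refine ⟨⋂₀ c, ⟨?_, isClosed_sInter fun J hJ => (hc hJ).isClosed,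
    fun p q hq J hJ => (hc hJ).add_mem p q (hq J hJ)⟩, fun J hJ => sInter_subset_of_mem hJ⟩
  exact IsCompact.nonempty_sInter_of_directed_nonempty_isCompact_isClosed
    (fun U hU V hV => (hchain.total hU hV).elim (fun h => ⟨U, hU, subset_rfl, h⟩)
      fun h => ⟨V, hV, h, subset_rfl⟩) (fun J hJ => (hc hJ).nonempty)
    (fun J hJ => (hc hJ).isClosed.isCompact) (fun J hJ => (hc hJ).isClosed)

variable {M : Set (Ultrafilter G)}

theorem Minimal.eq_range_add (hM : Minimal IsClosedLeftIdeal M) {r : Ultrafilter G}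
    (hr : r ∈ M) : M = range (· + r) :=
  (hM.eq_of_subset (isClosedLeftIdeal_range_add r)
    (by rintro _ ⟨u, rfl⟩; exact hM.1.add_mem u r hr)).symm

theorem Minimal.add_idempotent (hM : Minimal IsClosedLeftIdeal M) {e x : Ultrafilter G}
    (he : e ∈ M) (hee : e + e = e) (hx : x ∈ M) : x + e = x := by
  obtain ⟨u, rfl⟩ : x ∈ range (· + e) := hM.eq_range_add he ▸ hx
  rw [add_assoc, hee]

theorem exists_minimal_mem_of_isPiecewiseSyndetic {S : Set G} (hS : IsPiecewiseSyndetic S) :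
    ∃ M, Minimal IsClosedLeftIdeal M ∧ ∃ p ∈ M, S ∈ p := by
  obtain ⟨F, hT⟩ := hS
  obtain ⟨p₀, hp₀⟩ := isThick_iff_exists_ultrafilter.1 hT
  obtain ⟨M, hMsub, hM⟩ := (isClosedLeftIdeal_range_add p₀).exists_minimal_subset
  obtain ⟨r, hr⟩ := hM.1.nonempty
  obtain ⟨q, rfl⟩ := hMsub hr
  have hT : ⋃ x ∈ (F : Set G), {y | x + y ∈ S} ∈ q + p₀ := by
    refine mem_add_iff.2 (mem_of_superset univ_mem fun m _ => ?_)
    simpa only [mem_iUnion, exists_prop, mem_ofPred_eq, Finset.mem_coe] using hp₀ m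
  obtain ⟨x, -, hx⟩ := (finite_biUnion_mem_iff F.finite_toSet).1 hT
  exact ⟨M, hM, pure x + (q + p₀), hM.1.add_mem _ _ hr,
    mem_add_iff.2 (Ultrafilter.mem_pure.2 hx)⟩

theorem isPiecewiseSyndetic_of_mem_minimal (hM : Minimal IsClosedLeftIdeal M)
    {p : Ultrafilter G} (hp : p ∈ M) {S : Set G} (hS : S ∈ p) : IsPiecewiseSyndetic S := by
  classical
  -- `p = u + r` for some `u`, and any `t` in the `u`-large set `{t | -t + S ∈ r}` works.
  have key : ∀ r ∈ M, ∃ t, {y | t + y ∈ S} ∈ r := by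
    intro r hr
    obtain ⟨u, rfl⟩ : p ∈ range (· + r) := hM.eq_range_add hr ▸ hp
    exact Filter.nonempty_of_mem (mem_add_iff.1 hS)
  have : Nonempty G := (Filter.nonempty_of_mem hS).to_subtype.map Subtype.val
  choose! t ht using key
  obtain ⟨F, hF⟩ := hM.1.isClosed.isCompact.elim_finite_subcover
    (fun r => {q : Ultrafilter G | {y | t r + y ∈ S} ∈ q})
    (fun _ => ultrafilter_isOpen_basic _) (fun r hr => mem_iUnion.2 ⟨r, ht r hr⟩)
  refine ⟨F.image t, isThick_iff_exists_ultrafilter.2 ⟨p, fun g => ?_⟩⟩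
  obtain ⟨r, hrF, hr⟩ := mem_iUnion₂.1 (hF (hM.1.add_mem (pure g) p hp))
  exact mem_of_superset hr fun y hy => ⟨t r, Finset.mem_image_of_mem t hrF, hy⟩

theorem isPiecewiseSyndetic_iff_exists_minimal_mem {S : Set G} :
    IsPiecewiseSyndetic S ↔ ∃ M, Minimal IsClosedLeftIdeal M ∧ ∃ p ∈ M, S ∈ p :=
  ⟨exists_minimal_mem_of_isPiecewiseSyndetic,
    fun ⟨_, hM, _, hp, hS⟩ => isPiecewiseSyndetic_of_mem_minimal hM hp hS⟩

variable {H : Type*} [AddSemigroup H] {ι : Type*}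

theorem IsClosedLeftIdeal.preimage_map {M : Set (Ultrafilter H)} (hM : IsClosedLeftIdeal M)
    (ψ : ι → G →ₙ+ H) (hne : ∃ u : Ultrafilter G, ∀ i, u.map (ψ i) ∈ M) :
    IsClosedLeftIdeal {w | ∀ i, w.map (ψ i) ∈ M} where
  nonempty := hne
  isClosed := by
    rw [ofPred_forall]
    exact isClosed_iInter fun i => hM.isClosed.preimage (continuous_map (ψ i))
  add_mem v w hw i := by
    rw [Ultrafilter.map_add]
    exact hM.add_mem _ _ (hw i)

theorem exists_minimal_forall_map_eq (ψ : ι → G →ₙ+ H) {M : Set (Ultrafilter H)}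
    (hM : Minimal IsClosedLeftIdeal M) {p : Ultrafilter H} (hp : p ∈ M)
    {u : Ultrafilter G} (hu : ∀ i, u.map (ψ i) = p) :
    ∃ M', Minimal IsClosedLeftIdeal M' ∧ ∃ w ∈ M', ∀ i, w.map (ψ i) = p := by
  obtain ⟨M', hM'sub, hM'⟩ :=
    (hM.1.preimage_map ψ ⟨u, fun i => hu i ▸ hp⟩).exists_minimal_subset
  obtain ⟨e, he, hee⟩ := exists_idempotent_in_compact_add_subsemigroup
    Ultrafilter.continuous_add_left M' hM'.1.nonempty hM'.1.isClosed.isCompact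
    fun x _ y hy => hM'.1.add_mem x y hy
  refine ⟨M', hM', u + e, hM'.1.add_mem u e he, fun i => ?_⟩
  rw [Ultrafilter.map_add, hu i]
  exact hM.add_idempotent (hM'sub he i) (by rw [← Ultrafilter.map_add, hee]) hp

end ClosedLeftIdeal

def apTerm (i : ℤ) : ℤ × ℤ →ₙ+ ℤ where
  toFun q := q.1 + i * q.2
  map_add' a b := by simp only [Prod.fst_add, Prod.snd_add]; ring

/-- If `S ⊆ ℤ` is piecewise syndetic, then for every `k ∈ ℕ` the set
`{(a, d) : {a, a + d, a + 2d, …, a + kd} ⊆ S}` is piecewise syndetic in `ℤ × ℤ`. -/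
theorem abundance_of_AP_in_piecewise_syndetic (k : ℕ) (S : Set ℤ)
    (hS : IsPiecewiseSyndetic S) :
    IsPiecewiseSyndetic {p : ℤ × ℤ | ∀ i : ℕ, i ≤ k → p.1 + (i : ℤ) * p.2 ∈ S} := by
  obtain ⟨M, hM, p, hpM, hSp⟩ := isPiecewiseSyndetic_iff_exists_minimal_mem.1 hS
  have hsection : ∀ i : Fin (k + 1), (p.map fun a => (a, (0 : ℤ))).map (apTerm i) = p := by
    intro i
    rw [Ultrafilter.map_map]
    convert Ultrafilter.map_id p
    ext a
    simp [apTerm]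
  obtain ⟨M', hM', w, hwM', hw⟩ := exists_minimal_forall_map_eq _ hM hpM hsection
  have hAP : ⋂ i : Fin (k + 1), apTerm i ⁻¹' S ∈ w :=
    iInter_mem.2 fun i => show S ∈ w.map (apTerm i) from (hw i).symm ▸ hSp
  refine isPiecewiseSyndetic_iff_exists_minimal_mem.2
    ⟨M', hM', w, hwM', mem_of_superset hAP fun q hq i hi => ?_⟩
  exact mem_iInter.1 hq ⟨i, Nat.lt_succ_of_le hi⟩
end

section
/- Let (S,·) be a semigroup and let k ∈ ℕ. Then k-SCR(S) = {p ∈ βS : every A ∈ p is a k-SCR-set in S} is a two-sided ideal of the semigroup (βS,·); that is, for all p ∈ k-SCR(S) and q ∈ βS, both p·q ∈ k-SCR(S) and q·p ∈ k-SCR(S). -/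
/-!
Membership `A ∈ p * q` means that `{x | x⁻¹A ∈ q} ∈ p`, and `A ∈ q * p` yields some `x` with
`x⁻¹A ∈ p`; in both cases the set that lies in `p` is a `k`-SCR-set. Being a `k`-SCR-set then
passes back to `A`: a witness `a₁ f(t) a₂ ∈ x⁻¹A` becomes `(x a₁) f(t) a₂ ∈ A`, and a witness
`a₁ f(t) a₂ ∈ {x | x⁻¹A ∈ q}` for the finitely many `f ∈ F` gives one common `y` with
`a₁ f(t) (a₂ y) ∈ A`.
-/

/-- `A` is a `k`-SCR-set in the semigroup `S`: there exists `r ∈ ℕ` such that for every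
family `F` of at most `k` sequences in `S`, there exist `a₁, a₂ ∈ S` and `t ≤ r` with
`a₁ f(t) a₂ ∈ A` for every `f ∈ F`. -/
def IskSCRSet {S : Type*} [Semigroup S] (k : ℕ) (A : Set S) : Prop :=
  ∃ r : ℕ, ∀ F : Finset (ℕ → S), F.card ≤ k →
    ∃ a₁ a₂ : S, ∃ t ≤ r, ∀ f ∈ F, a₁ * f t * a₂ ∈ A

/- The semigroup structure on `βS = Ultrafilter S` given by
`A ∈ p * q ↔ {x | {y | x * y ∈ A} ∈ q} ∈ p`. -/
attribute [local instance] Ultrafilter.semigroup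

namespace IskSCRSet

variable {S : Type*} [Semigroup S] {k : ℕ} {A : Set S}

theorem of_preimage_mul_left {x : S} (h : IskSCRSet k ((x * ·) ⁻¹' A)) : IskSCRSet k A := by
  obtain ⟨r, hr⟩ := h
  refine ⟨r, fun F hF => ?_⟩
  obtain ⟨a₁, a₂, t, ht, hmem⟩ := hr F hF
  refine ⟨x * a₁, a₂, t, ht, fun f hf => ?_⟩
  simpa only [Set.mem_preimage, mul_assoc] using hmem f hf

theorem of_eventually_mul_right {l : Filter S} [l.NeBot]
    (h : IskSCRSet k {x | ∀ᶠ y in l, x * y ∈ A}) : IskSCRSet k A := by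
  obtain ⟨r, hr⟩ := h
  refine ⟨r, fun F hF => ?_⟩
  obtain ⟨a₁, a₂, t, ht, hmem⟩ := hr F hF
  have hcommon : ∀ᶠ y in l, ∀ f ∈ F, a₁ * f t * a₂ * y ∈ A :=
    (Filter.eventually_all_finset F).mpr hmem
  obtain ⟨y, hy⟩ := hcommon.exists
  refine ⟨a₁, a₂ * y, t, ht, fun f hf => ?_⟩
  simpa only [mul_assoc] using hy f hf

end IskSCRSet

/-- `k-SCR(S) = {p ∈ βS : every A ∈ p is a k-SCR-set}` is a two-sided ideal of `(βS, ·)`: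
for all `p ∈ k-SCR(S)` and `q ∈ βS`, both `p * q ∈ k-SCR(S)` and `q * p ∈ k-SCR(S)`. -/
theorem kSCR_ultrafilters_two_sided_ideal {S : Type*} [Semigroup S] (k : ℕ)
    (p : Ultrafilter S) (hp : ∀ A ∈ p, IskSCRSet k A) (q : Ultrafilter S) :
    (∀ A ∈ p * q, IskSCRSet k A) ∧ (∀ A ∈ q * p, IskSCRSet k A) := by
  refine ⟨fun A hA => (hp _ hA).of_eventually_mul_right, fun A hA => ?_⟩
  obtain ⟨x, hx⟩ := (show ∀ᶠ x in q, ∀ᶠ y in p, x * y ∈ A from hA).exists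
  exact (hp _ hx).of_preimage_mul_left
end

section
/- Let (S,·) be an arbitrary semigroup and let A ⊆ S be a SCR-set in S. Then the set D = {(a₁,a₂,d) ∈ S × S × S : a₁·d·a₂ ∈ A and a₁·d·d·a₂ ∈ A} is a SCR-set in the semigroup S × S × S (with coordinatewise multiplication). -/
/-!
Writing `x = (x₁, x₂, d)` and fixing any `c ∈ S`, the triple `(a₁, c, c) * x * (c, a₂, c)` lies
in `D` exactly when `a₁ * (x₁ c c d c c x₂) * a₂` and `a₁ * (x₁ c c d c c d c c x₂) * a₂` both lie
in `A`. So a family of `k` sequences in `S × S × S` is handled by applying the SCR property of `A`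
to the `2k` sequences in `S` obtained through these two maps, with the same `t`.
-/

/-- `A` is a strong combinatorially rich set (SCR-set) in the semigroup `S`. -/
def IsSCRSet {S : Type*} [Semigroup S] (A : Set S) : Prop :=
  ∀ k : ℕ, ∃ r : ℕ, ∀ F : Finset (ℕ → S), F.card ≤ k →
    ∃ a₁ a₂ : S, ∃ t ≤ r, ∀ f ∈ F, a₁ * f t * a₂ ∈ A

namespace IsSCRSet

variable {S T : Type*} [Semigroup S] [Semigroup T] {A : Set S}

theorem nonempty (hA : IsSCRSet A) : Nonempty S := by
  obtain ⟨r, hr⟩ := hA 0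
  obtain ⟨a, -, -⟩ := hr ∅ (by simp)
  exact ⟨a⟩

theorem of_finite_pullback {ι : Type*} [Fintype ι] {B : Set T} (hA : IsSCRSet A)
    (φ : ι → T → S) (w₁ w₂ : S → S → T)
    (hφ : ∀ a₁ a₂ x, (∀ i, a₁ * φ i x * a₂ ∈ A) → w₁ a₁ a₂ * x * w₂ a₁ a₂ ∈ B) :
    IsSCRSet B := by
  classical
  intro k
  obtain ⟨r, hr⟩ := hA (k * Fintype.card ι)
  refine ⟨r, fun F hF => ?_⟩
  set G : Finset (ℕ → S) := (F ×ˢ Finset.univ).image fun p => φ p.2 ∘ p.1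
  have hG : G.card ≤ k * Fintype.card ι :=
    calc G.card ≤ (F ×ˢ (Finset.univ : Finset ι)).card := Finset.card_image_le
      _ = F.card * Fintype.card ι := by rw [Finset.card_product, Finset.card_univ]
      _ ≤ k * Fintype.card ι := Nat.mul_le_mul_right _ hF
  obtain ⟨a₁, a₂, t, ht, hmem⟩ := hr G hG
  refine ⟨w₁ a₁ a₂, w₂ a₁ a₂, t, ht, fun f hf => hφ a₁ a₂ (f t) fun i => ?_⟩
  exact hmem (φ i ∘ f)
    (Finset.mem_image.2 ⟨(f, i), Finset.mem_product.2 ⟨hf, Finset.mem_univ i⟩, rfl⟩)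

end IsSCRSet

/-- If `A` is a SCR-set in a semigroup `S`, then
`D = {(a₁, a₂, d) : a₁ d a₂ ∈ A and a₁ d d a₂ ∈ A}` is a SCR-set in `S × S × S`. -/
theorem abundance_of_progressions_in_SCR_strong {S : Type*} [Semigroup S] (A : Set S)
    (hA : IsSCRSet A) :
    IsSCRSet {x : S × S × S | x.1 * x.2.2 * x.2.1 ∈ A ∧ x.1 * x.2.2 * x.2.2 * x.2.1 ∈ A} := by
  obtain ⟨c⟩ := hA.nonempty
  refine hA.of_finite_pullback
    ![fun x => x.1 * c * c * x.2.2 * c * c * x.2.1,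
      fun x => x.1 * c * c * x.2.2 * c * c * x.2.2 * c * c * x.2.1]
    (fun a₁ _ => (a₁, c, c)) (fun _ a₂ => (c, a₂, c)) fun a₁ a₂ x hx => ?_
  obtain ⟨h₁, h₂⟩ := Fin.forall_fin_two.1 hx
  simp only [Matrix.cons_val_zero, Matrix.cons_val_one] at h₁ h₂
  simp only [Set.mem_ofPred_eq, Prod.fst_mul, Prod.snd_mul]
  exact ⟨by simpa only [mul_assoc] using h₁, by simpa only [mul_assoc] using h₂⟩
end
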